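/- Let S be a uniformly random permutation of {1,...,n} with n ≥ 2, and define ν_{n,p}^{(l)}(S) as above with κ_{n,p} = Σ_{i=1}^n i^p. Then Var(ν_{n,p}^{(l)}(S)) = (n(n+1)/3)·(κ_{n,2p} − κ_{n,p}²/n) / (2κ_{n,p+1} − (n+1)κ_{n,p})². -/

import Mathlib

/-!
The statistic `nuL n p` is an affine function of the linear rank statistic
`L σ = ∑ i, w i * v (σ i)` with `w i = (n + 1 - (i + 1)) ^ p` and `v k = k + 1`, so its
variance is `(2 / D) ^ 2 * Var L`, `D` being the denominator of `nuL`. Under a uniform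
permutation `σ i` is uniform on the `n` values and, for `i ≠ j`, `(σ i, σ j)` is uniform on the
`n (n - 1)` off-diagonal pairs; these two facts give Hoeffding's formula
`Var L = (n ∑ w² - (∑ w)²) (n ∑ v² - (∑ v)²) / (n² (n - 1))`, and
`n ∑ v² - (∑ v)² = n² (n² - 1) / 12`.
-/

open Finset

/-- κ_{n,p} = Σ_{i=1}^n i^p, as a real number. -/
noncomputable def kappa (n p : ℕ) : ℝ := ∑ i ∈ Finset.Icc 1 n, (i : ℝ) ^ p

/-- The weighted rank statistic ν_{n,p}^{(l)} for a permutation of {1,...,n},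
represented as a permutation of `Fin n` acting on ranks i+1. -/
noncomputable def nuL (n p : ℕ) (σ : Equiv.Perm (Fin n)) : ℝ :=
  1 + 2 * (∑ i : Fin n, (((i : ℕ) : ℝ) + 1 - (((σ i : ℕ) : ℝ) + 1)) *
              ((n : ℝ) + 1 - ((i : ℕ) + 1)) ^ p) /
      (2 * kappa n (p + 1) - ((n : ℝ) + 1) * kappa n p)

open Equiv

theorem exists_perm_apply_eq_and_apply_eq {α : Type*} [DecidableEq α] {a b a' b' : α}
    (hab : a ≠ b) (hab' : a' ≠ b') : ∃ π : Perm α, π a' = a ∧ π b' = b := by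
  have hb' : swap a' a b' ≠ a := fun h =>
    hab' ((swap a' a).injective (h.trans (swap_apply_left a' a).symm)).symm
  exact ⟨swap (swap a' a b') b * swap a' a, by simp [swap_apply_of_ne_of_ne hb'.symm hab], by simp⟩

section PermutationSums

variable {α : Type*} [Fintype α] [DecidableEq α]

theorem sum_perm_sum_apply (g : α → ℝ) :
    ∑ σ : Perm α, ∑ a, g (σ a) = (Fintype.card α).factorial * ∑ a, g a := by
  simp [Equiv.sum_comp, Fintype.card_perm]

theorem sum_sum_sum_perm_apply₂ (h : α → α → ℝ) :
    ∑ x, ∑ y, ∑ σ : Perm α, h (σ x) (σ y) = (Fintype.card α).factorial * ∑ k, ∑ l, h k l :=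
  calc _ = ∑ x, ∑ σ : Perm α, ∑ y, h (σ x) (σ y) := sum_congr rfl fun _ _ => sum_comm
    _ = ∑ σ : Perm α, ∑ x, ∑ y, h (σ x) (σ y) := sum_comm
    _ = ∑ σ : Perm α, ∑ x, ∑ l, h (σ x) l :=
        sum_congr rfl fun σ _ => sum_congr rfl fun x _ => Equiv.sum_comp σ (h (σ x))
    _ = _ := sum_perm_sum_apply fun k => ∑ l, h k l

theorem sum_perm_apply_eq (g : α → ℝ) (a b : α) :
    ∑ σ : Perm α, g (σ a) = ∑ σ : Perm α, g (σ b) :=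
  Fintype.sum_equiv (Equiv.mulRight (swap b a)) _ _ fun σ => by simp

theorem sum_perm_apply₂_eq (h : α → α → ℝ) {a b a' b' : α} (hab : a ≠ b) (hab' : a' ≠ b') :
    ∑ σ : Perm α, h (σ a) (σ b) = ∑ σ : Perm α, h (σ a') (σ b') := by
  obtain ⟨π, ha, hb⟩ := exists_perm_apply_eq_and_apply_eq hab hab'
  exact Fintype.sum_equiv (Equiv.mulRight π) _ _ fun σ => by simp [ha, hb]

theorem card_mul_sum_perm_apply (g : α → ℝ) (a : α) :
    Fintype.card α * ∑ σ : Perm α, g (σ a) = (Fintype.card α).factorial * ∑ k, g k := by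
  calc _ = ∑ b, ∑ σ : Perm α, g (σ b) := by simp [sum_perm_apply_eq g _ a]
    _ = _ := by rw [Finset.sum_comm, sum_perm_sum_apply]

theorem card_mul_card_sub_one_mul_sum_perm_apply₂ (h : α → α → ℝ) {a b : α} (hab : a ≠ b) :
    Fintype.card α * (Fintype.card α - 1) * ∑ σ : Perm α, h (σ a) (σ b)
      = (Fintype.card α).factorial * (∑ k, ∑ l, h k l - ∑ k, h k k) := by
  have hcard : 1 ≤ Fintype.card α := Fintype.card_pos_iff.2 ⟨a⟩
  calc _ = ∑ x, ∑ y ∈ univ.erase x, ∑ σ : Perm α, h (σ x) (σ y) := by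
        rw [Finset.sum_congr rfl fun x _ => Finset.sum_congr rfl fun y hy =>
          sum_perm_apply₂_eq h (Finset.ne_of_mem_erase hy).symm hab]
        simp only [sum_const, mem_univ, card_erase_of_mem, card_univ, nsmul_eq_mul,
          Nat.cast_sub hcard, Nat.cast_one]
        ring
    _ = ∑ x, ∑ y, ∑ σ : Perm α, h (σ x) (σ y) - ∑ σ : Perm α, ∑ x, h (σ x) (σ x) := by
        simp only [Finset.sum_erase_eq_sub (Finset.mem_univ _), Finset.sum_sub_distrib,
          Finset.sum_comm (γ := Perm α)]
    _ = _ := by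
        rw [sum_sum_sum_perm_apply₂, sum_perm_sum_apply (fun k => h k k), mul_sub]

def linearRankStat (w v : α → ℝ) (σ : Perm α) : ℝ := ∑ a, w a * v (σ a)

theorem card_mul_sum_linearRankStat (w v : α → ℝ) :
    Fintype.card α * ∑ σ : Perm α, linearRankStat w v σ
      = (Fintype.card α).factorial * ((∑ a, w a) * ∑ k, v k) := by
  simp only [linearRankStat]
  rw [Finset.sum_comm, Finset.mul_sum]
  simp only [← Finset.mul_sum, mul_left_comm (Fintype.card α : ℝ), card_mul_sum_perm_apply]
  rw [← Finset.sum_mul]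
  ring

theorem card_mul_card_sub_one_mul_sum_perm_apply_mul_apply (v : α → ℝ) (a b : α) :
    Fintype.card α * (Fintype.card α - 1) * ∑ σ : Perm α, v (σ a) * v (σ b)
      = (Fintype.card α).factorial *
          if a = b then (Fintype.card α - 1) * ∑ k, v k ^ 2 else (∑ k, v k) ^ 2 - ∑ k, v k ^ 2 := by
  split_ifs with hab
  · subst hab
    rw [mul_right_comm, card_mul_sum_perm_apply (fun k => v k * v k)]
    simp only [sq]
    ring
  · rw [card_mul_card_sub_one_mul_sum_perm_apply₂ (fun k l => v k * v l) hab, sq,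
      Finset.sum_mul_sum]
    simp only [sq]

theorem card_mul_card_sub_one_mul_sum_linearRankStat_sq (w v : α → ℝ) :
    Fintype.card α * (Fintype.card α - 1) * ∑ σ : Perm α, linearRankStat w v σ ^ 2
      = (Fintype.card α).factorial * ((Fintype.card α - 1) * (∑ a, w a ^ 2) * ∑ k, v k ^ 2
          + ((∑ a, w a) ^ 2 - ∑ a, w a ^ 2) * ((∑ k, v k) ^ 2 - ∑ k, v k ^ 2)) := by
  set D := (Fintype.card α - 1 : ℝ) * ∑ k, v k ^ 2
  set E := (∑ k, v k) ^ 2 - ∑ k, v k ^ 2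
  calc _ = ∑ a, ∑ b, w a * w b *
        (Fintype.card α * (Fintype.card α - 1) * ∑ σ : Perm α, v (σ a) * v (σ b)) := by
        simp only [linearRankStat, sq, Finset.sum_mul_sum]
        simp only [Finset.mul_sum]
        exact Finset.sum_comm.trans <| sum_congr rfl fun a _ => Finset.sum_comm.trans <|
          sum_congr rfl fun b _ => sum_congr rfl fun σ _ => by ring
    _ = (Fintype.card α).factorial * ∑ a, ∑ b, w a * w b * (E + if a = b then D - E else 0) := by
        rw [Finset.mul_sum]
        refine sum_congr rfl fun a _ => ?_
        rw [Finset.mul_sum]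
        refine sum_congr rfl fun b _ => ?_
        rw [card_mul_card_sub_one_mul_sum_perm_apply_mul_apply]
        split_ifs <;> ring
    _ = _ := by
        simp only [mul_add, Finset.sum_add_distrib, mul_ite, mul_zero, Finset.sum_ite_eq,
          Finset.mem_univ, if_true, ← Finset.sum_mul, ← Finset.mul_sum]
        simp only [D, ← sq]
        ring

noncomputable def permVariance (F : Perm α → ℝ) : ℝ :=
  (∑ σ, F σ ^ 2) / (Fintype.card α).factorial - ((∑ σ, F σ) / (Fintype.card α).factorial) ^ 2

theorem permVariance_const_add_mul (F : Perm α → ℝ) (c d : ℝ) :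
    permVariance (fun σ => c + d * F σ) = d ^ 2 * permVariance F := by
  have hcard : (Fintype.card (Perm α) : ℝ) = (Fintype.card α).factorial := by
    rw [Fintype.card_perm]
  have hfact : ((Fintype.card α).factorial : ℝ) ≠ 0 := by positivity
  simp only [permVariance, add_sq, Finset.sum_add_distrib, Finset.sum_const, card_univ,
    nsmul_eq_mul, hcard, ← Finset.mul_sum, mul_pow]
  field_simp
  ring

theorem permVariance_linearRankStat (hα : 2 ≤ Fintype.card α) (w v : α → ℝ) :
    permVariance (linearRankStat w v)
      = (Fintype.card α * ∑ a, w a ^ 2 - (∑ a, w a) ^ 2)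
          * (Fintype.card α * ∑ k, v k ^ 2 - (∑ k, v k) ^ 2)
          / (Fintype.card α ^ 2 * (Fintype.card α - 1)) := by
  have hn : (Fintype.card α : ℝ) ≠ 0 := by positivity
  have hn1 : (Fintype.card α - 1 : ℝ) ≠ 0 := by
    have : (2 : ℝ) ≤ Fintype.card α := by exact_mod_cast hα
    linarith
  rw [permVariance, eq_div_of_mul_eq (mul_ne_zero hn hn1)
      ((mul_comm _ _).trans (card_mul_card_sub_one_mul_sum_linearRankStat_sq w v)),
    eq_div_of_mul_eq hn ((mul_comm _ _).trans (card_mul_sum_linearRankStat w v))]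
  field_simp
  ring

end PermutationSums

theorem kappa_succ (n p : ℕ) : kappa (n + 1) p = kappa n p + ((n : ℝ) + 1) ^ p := by
  rw [kappa, kappa, Finset.sum_Icc_succ_top (by omega)]
  push_cast
  rfl

theorem kappa_one (n : ℕ) : kappa n 1 = n * (n + 1) / 2 := by
  induction n with
  | zero => simp [kappa]
  | succ n ih => rw [kappa_succ, ih]; push_cast; ring

theorem kappa_two (n : ℕ) : kappa n 2 = n * (n + 1) * (2 * n + 1) / 6 := by
  induction n with
  | zero => simp [kappa]
  | succ n ih => rw [kappa_succ, ih]; push_cast; ring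

def rankValue (n : ℕ) (k : Fin n) : ℝ := (k : ℕ) + 1

def rankWeight (n p : ℕ) (i : Fin n) : ℝ := ((n : ℝ) + 1 - ((i : ℕ) + 1)) ^ p

theorem sum_rankValue_pow (n p : ℕ) : ∑ k, rankValue n k ^ p = kappa n p := by
  induction n with
  | zero => simp [kappa]
  | succ n ih => rw [Fin.sum_univ_castSucc, kappa_succ, ← ih]; simp [rankValue]

theorem rankWeight_eq_rankValue_rev (n p : ℕ) (i : Fin n) :
    rankWeight n p i = rankValue n i.rev ^ p := by
  rw [rankWeight, rankValue, Fin.val_rev, Nat.cast_sub i.isLt]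
  push_cast
  ring

theorem sum_rankWeight (n p : ℕ) : ∑ i, rankWeight n p i = kappa n p := by
  simp only [rankWeight_eq_rankValue_rev]
  exact (Equiv.sum_comp Fin.revPerm (rankValue n · ^ p)).trans (sum_rankValue_pow n p)

theorem sum_rankWeight_sq (n p : ℕ) : ∑ i, rankWeight n p i ^ 2 = kappa n (2 * p) := by
  simp only [rankWeight, ← pow_mul, mul_comm p 2]
  exact sum_rankWeight n (2 * p)

theorem nuL_eq_const_add_mul_linearRankStat (n p : ℕ) :
    nuL n p = fun σ => (1 + 2 * linearRankStat (rankWeight n p) (rankValue n) 1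
        / (2 * kappa n (p + 1) - ((n : ℝ) + 1) * kappa n p))
      + (-2 / (2 * kappa n (p + 1) - ((n : ℝ) + 1) * kappa n p))
        * linearRankStat (rankWeight n p) (rankValue n) σ := by
  funext σ
  have hsum : ∑ i : Fin n, (((i : ℕ) : ℝ) + 1 - (((σ i : ℕ) : ℝ) + 1)) *
      ((n : ℝ) + 1 - ((i : ℕ) + 1)) ^ p
      = linearRankStat (rankWeight n p) (rankValue n) 1
        - linearRankStat (rankWeight n p) (rankValue n) σ := by
    simp only [linearRankStat, ← Finset.sum_sub_distrib, rankWeight, rankValue, Perm.one_apply]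
    exact sum_congr rfl fun i _ => by ring
  rw [nuL, hsum]
  ring

theorem stmt_17_general (n p : ℕ) (hn : 2 ≤ n) :
    (∑ σ : Equiv.Perm (Fin n), (nuL n p σ) ^ 2) / (Nat.factorial n : ℝ)
      - ((∑ σ : Equiv.Perm (Fin n), nuL n p σ) / (Nat.factorial n : ℝ)) ^ 2
      = ((n : ℝ) * ((n : ℝ) + 1) / 3) * (kappa n (2 * p) - (kappa n p) ^ 2 / n) /
          (2 * kappa n (p + 1) - ((n : ℝ) + 1) * kappa n p) ^ 2 := by
  have hvar : (∑ σ : Equiv.Perm (Fin n), (nuL n p σ) ^ 2) / (Nat.factorial n : ℝ)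
      - ((∑ σ : Equiv.Perm (Fin n), nuL n p σ) / (Nat.factorial n : ℝ)) ^ 2
      = permVariance (nuL n p) := by simp [permVariance]
  have hv : ∑ k, rankValue n k = kappa n 1 := by simpa using sum_rankValue_pow n 1
  have hn1 : (n : ℝ) - 1 ≠ 0 := by
    have : (2 : ℝ) ≤ n := by exact_mod_cast hn
    linarith
  rw [hvar, nuL_eq_const_add_mul_linearRankStat, permVariance_const_add_mul,
    permVariance_linearRankStat (by simpa using hn)]
  simp only [Fintype.card_fin, sum_rankWeight, sum_rankWeight_sq, sum_rankValue_pow, hv,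
    kappa_one, kappa_two]
  field_simp
  ring

/-- Under a uniformly random permutation, the variance of ν_{n,p}^{(l)}. -/
theorem stmt_17 (n p : ℕ) (hn : 2 ≤ n) (hp : 1 ≤ p) :
    (∑ σ : Equiv.Perm (Fin n), (nuL n p σ) ^ 2) / (Nat.factorial n : ℝ)
      - ((∑ σ : Equiv.Perm (Fin n), nuL n p σ) / (Nat.factorial n : ℝ)) ^ 2
      = ((n : ℝ) * ((n : ℝ) + 1) / 3) * (kappa n (2 * p) - (kappa n p) ^ 2 / n) /
          (2 * kappa n (p + 1) - ((n : ℝ) + 1) * kappa n p) ^ 2 :=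
  stmt_17_general n p hn
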